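/- For every k ≥ 1, the graph BC(k) satisfies χ_s(BC(k)) ≥ k; that is, BC(k) admits no (k−1)-subcoloring. -/

import Mathlib

/-- A `k`-subcoloring of a simple graph `G`: every color class induces a
disjoint union of cliques. -/
def IsSubcoloring {V : Type*} {k : ℕ} (G : SimpleGraph V) (μ : V → Fin k) : Prop :=
  ∀ u v w : V, μ u = μ v → μ v = μ w → G.Adj u v → G.Adj v w → u ≠ w → G.Adj u w

/-- Vertex set of `BC(n+1)`: `BCType 0` is a single vertex, and `BCType (n+1)`
consists of a new (universal) vertex `none` together with two disjoint copies
of `BCType n`. -/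
def BCType : ℕ → Type
  | 0 => Unit
  | n + 1 => Option (Bool × BCType n)

/-- Adjacency on `Option (Bool × α)`: `none` is universal, and two vertices of
the copies are adjacent iff they lie in the same copy and are adjacent there. -/
def optAdj {α : Type} (A : α → α → Prop) : Option (Bool × α) → Option (Bool × α) → Prop
  | none, none => False
  | none, some _ => True
  | some _, none => True
  | some (b, x), some (c, y) => b = c ∧ A x y

/-- Adjacency relation of `BC(n+1)` on `BCType n`. -/
def BCAdj : (n : ℕ) → BCType n → BCType n → Prop
  | 0 => fun _ _ => False
  | n + 1 => optAdj (BCAdj n)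

theorem optAdj_symm {α : Type} {A : α → α → Prop} (hA : ∀ x y, A x y → A y x) :
    ∀ p q, optAdj A p q → optAdj A q p
  | none, none, h => h
  | none, some _, _ => trivial
  | some _, none, _ => trivial
  | some (_, x), some (_, y), h => ⟨h.1.symm, hA x y h.2⟩

theorem optAdj_irrefl {α : Type} {A : α → α → Prop} (hA : ∀ x, ¬ A x x) :
    ∀ p, ¬ optAdj A p p
  | none, h => h
  | some (_, x), h => hA x h.2

theorem BCAdj_symm : ∀ n, ∀ p q : BCType n, BCAdj n p q → BCAdj n q p
  | 0, _, _, h => h.elim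
  | n + 1, p, q, h => optAdj_symm (BCAdj_symm n) p q h

theorem BCAdj_irrefl : ∀ n, ∀ p : BCType n, ¬ BCAdj n p p
  | 0, _, h => h
  | n + 1, p, h => optAdj_irrefl (BCAdj_irrefl n) p h

/-- The graph `BC(n+1)`: `BCGraph 0 = BC(1)` is a single vertex, and
`BCGraph (n+1) = BC(n+2)` is obtained by adding a universal vertex to the
disjoint union of two copies of `BCGraph n`. -/
def BCGraph (n : ℕ) : SimpleGraph (BCType n) where
  Adj := BCAdj n
  symm := ⟨by intro p q h; exact BCAdj_symm n p q h⟩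
  loopless := ⟨by intro p h; exact BCAdj_irrefl n p h⟩

/-- Drop the color `c`: an injection from `Fin (n+1) \ {c}` into `Fin n`. -/
def dropColor {n : ℕ} (c d : Fin (n + 1)) (h : d ≠ c) : Fin n :=
  if hd : d.val < c.val then ⟨d.val, by omega⟩
  else ⟨d.val - 1, by
    have hdc : d.val ≠ c.val := fun he => h (Fin.ext he)
    have := d.isLt; have := c.isLt; omega⟩

theorem dropColor_inj {n : ℕ} {c d e : Fin (n + 1)} (hd : d ≠ c) (he : e ≠ c)
    (h : dropColor c d hd = dropColor c e he) : d = e := by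
  have hdc : d.val ≠ c.val := fun hx => hd (Fin.ext hx)
  have hec : e.val ≠ c.val := fun hx => he (Fin.ext hx)
  have hv := congrArg Fin.val h
  unfold dropColor at hv
  apply Fin.ext
  split at hv <;> split at hv <;> simp at hv <;> omega

theorem BC_no_subcoloring : ∀ n, ¬ ∃ μ : BCType n → Fin n, IsSubcoloring (BCGraph n) μ := by
  intro n
  induction n with
  | zero =>
    rintro ⟨μ, -⟩
    exact (μ ()).elim0
  | succ n ih =>
    rintro ⟨μ, hμ⟩
    set c := μ none with hc
    -- some copy avoids the color c
    have hcopy : ∃ b : Bool, ∀ x : BCType n, μ (some (b, x)) ≠ c := by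
      by_contra hco
      push_neg at hco
      obtain ⟨x, hx⟩ := hco true
      obtain ⟨y, hy⟩ := hco false
      have hadj := hμ (some (true, x)) none (some (false, y)) hx hy.symm
        trivial trivial (by
        intro h
        have := congrArg (Option.map Prod.fst) h
        simp at this)
      exact (by simp [BCGraph, BCAdj, optAdj] at hadj : ¬ _) hadj
    obtain ⟨b, hb⟩ := hcopy
    apply ih
    refine ⟨fun x => dropColor c (μ (some (b, x))) (hb x), ?_⟩
    intro u v w huv hvw hauv havw huw
    have h1 : μ (some (b, u)) = μ (some (b, v)) := dropColor_inj _ _ huv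
    have h2 : μ (some (b, v)) = μ (some (b, w)) := dropColor_inj _ _ hvw
    have hadj := hμ (some (b, u)) (some (b, v)) (some (b, w)) h1 h2
      ⟨rfl, hauv⟩ ⟨rfl, havw⟩ (by
        intro h
        injection h with h'
        exact huw (congrArg Prod.snd h'))
    exact hadj.2

/-- For every `k ≥ 1`, the graph `BC(k)` has subchromatic number at least `k`:
it admits no `(k-1)`-subcoloring. -/
theorem BC_subchromatic_ge (k : ℕ) (hk : 1 ≤ k) :
    ¬ ∃ μ : BCType (k - 1) → Fin (k - 1), IsSubcoloring (BCGraph (k - 1)) μ :=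
  BC_no_subcoloring (k - 1)
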